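/- Graphs compositionality of sum-out: let φ₁ over 𝐗₁ = 𝐘₁ ⊎ 𝐖₁ and φ₂ over 𝐗₂ = 𝐘₂ ⊎ 𝐖₂ be factors, with 𝐖₁ ∩ 𝐗₂ = ∅ and 𝐖₂ ∩ 𝐗₁ = ∅, and let Δ ⊆ 𝐘₁ ∪ 𝐘₂. Setting 𝐙 = (𝐘₁ ∪ 𝐘₂) \ Δ, we have ∑_{(𝐗₁ ∪ 𝐗₂) \ Δ} (φ₁ ⊙ φ₂) = ∑_𝐙 ((∑_{𝐖₁} φ₁) ⊙ (∑_{𝐖₂} φ₂)). -/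

import Mathlib

open Finset

/-- A factor over a set `S` of variables: a function on total instantiations
that only depends on the values of the variables in `S`. -/
def FDependsOn {V : Type*} {Val : V → Type*}
    (φ : (∀ v, Val v) → NNReal) (S : Finset V) : Prop :=
  ∀ a b : ∀ v, Val v, (∀ v ∈ S, a v = b v) → φ a = φ b

/-- Summing out the variables in `Z` from a factor. -/
def fsumOut {V : Type*} [DecidableEq V] {Val : V → Type*} [∀ v, Fintype (Val v)]
    (Z : Finset V) (φ : (∀ v, Val v) → NNReal) : (∀ v, Val v) → NNReal :=
  fun a => ∑ z : (∀ v : Z, Val v), φ (fun v => if h : v ∈ Z then z ⟨v, h⟩ else a v)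

/-! The variables `W₁ ∪ W₂` avoid `Δ` and `Y₁ ∪ Y₂`, so the left-hand side sums out `W₁ ∪ W₂`
first and `(Y₁ ∪ Y₂) \ Δ` afterwards. Summing out `W₁ ∪ W₂` from `φ₁ ⊙ φ₂` factorises, because
each factor is constant in the variables the other one sums out and can be pulled out of that sum. -/

section FactorAlgebra

variable {V : Type*} [DecidableEq V] {Val : V → Type*} [∀ v, Fintype (Val v)]

lemma fsumOut_apply (Z : Finset V) (φ : (∀ v, Val v) → NNReal) (a : ∀ v, Val v) :
    fsumOut Z φ a = ∑ z : (∀ v : Z, Val v), φ (Function.updateFinset a Z z) := rfl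

lemma fsumOut_union {A B : Finset V} (h : Disjoint A B) (φ : (∀ v, Val v) → NNReal) :
    fsumOut (A ∪ B) φ = fsumOut A (fsumOut B φ) := by
  funext a
  simp only [fsumOut_apply]
  rw [← Equiv.sum_comp (Equiv.piFinsetUnion Val h), Fintype.sum_prod_type]
  refine sum_congr rfl fun x _ => sum_congr rfl fun y _ => ?_
  rw [Function.updateFinset_updateFinset h]

lemma FDependsOn.fsumOut {S W : Finset V} {φ : (∀ v, Val v) → NNReal}
    (h : FDependsOn φ (S ∪ W)) : FDependsOn (fsumOut W φ) S := by
  intro a b hab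
  refine sum_congr rfl fun z _ => h _ _ fun v hv => ?_
  by_cases hW : v ∈ W
  · simp [hW]
  · have hS : v ∈ S := (mem_union.mp hv).resolve_right hW
    simp [hW, hab v hS]

lemma fsumOut_mul_left {Z S : Finset V} {φ ψ : (∀ v, Val v) → NNReal}
    (hφ : FDependsOn φ S) (hZS : Disjoint Z S) :
    fsumOut Z (fun a => φ a * ψ a) = fun a => φ a * fsumOut Z ψ a := by
  funext a
  simp only [fsumOut_apply, mul_sum]
  refine sum_congr rfl fun z _ => congrArg (· * _) (hφ _ _ fun v hv => ?_)
  simp [Function.updateFinset, disjoint_right.mp hZS hv]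

lemma fsumOut_mul_right {Z S : Finset V} {φ ψ : (∀ v, Val v) → NNReal}
    (hφ : FDependsOn φ S) (hZS : Disjoint Z S) :
    fsumOut Z (fun a => ψ a * φ a) = fun a => fsumOut Z ψ a * φ a := by
  simp_rw [mul_comm _ (φ _)]
  exact fsumOut_mul_left hφ hZS

lemma fsumOut_union_mul {S₁ W₁ S₂ W₂ : Finset V} {φ₁ φ₂ : (∀ v, Val v) → NNReal}
    (h₁ : FDependsOn φ₁ (S₁ ∪ W₁)) (h₂ : FDependsOn φ₂ (S₂ ∪ W₂))
    (hW₁ : Disjoint W₁ (S₂ ∪ W₂)) (hW₂ : Disjoint W₂ (S₁ ∪ W₁)) :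
    fsumOut (W₁ ∪ W₂) (fun a => φ₁ a * φ₂ a) = fun a => fsumOut W₁ φ₁ a * fsumOut W₂ φ₂ a := by
  obtain ⟨hW₁S₂, hW₁W₂⟩ := disjoint_union_right.mp hW₁
  rw [fsumOut_union hW₁W₂, fsumOut_mul_left h₁ hW₂, fsumOut_mul_right h₂.fsumOut hW₁S₂]

end FactorAlgebra

/-- Graphs compositionality of sum-out. -/
theorem graphs_compositionality {V : Type*} [DecidableEq V] {Val : V → Type*}
    [∀ v, Fintype (Val v)] (Y₁ W₁ Y₂ W₂ Δ : Finset V)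
    (φ₁ φ₂ : (∀ v, Val v) → NNReal)
    (h₁ : FDependsOn φ₁ (Y₁ ∪ W₁)) (h₂ : FDependsOn φ₂ (Y₂ ∪ W₂))
    (hd₁ : Disjoint Y₁ W₁) (hd₂ : Disjoint Y₂ W₂)
    (hW₁ : Disjoint W₁ (Y₂ ∪ W₂)) (hW₂ : Disjoint W₂ (Y₁ ∪ W₁))
    (hΔ : Δ ⊆ Y₁ ∪ Y₂) :
    fsumOut (((Y₁ ∪ W₁) ∪ (Y₂ ∪ W₂)) \ Δ) (fun a => φ₁ a * φ₂ a)
      = fsumOut ((Y₁ ∪ Y₂) \ Δ)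
          (fun a => fsumOut W₁ φ₁ a * fsumOut W₂ φ₂ a) := by
  have hYW : Disjoint (Y₁ ∪ Y₂) (W₁ ∪ W₂) := by
    obtain ⟨hW₁Y₂, -⟩ := disjoint_union_right.mp hW₁
    obtain ⟨hW₂Y₁, -⟩ := disjoint_union_right.mp hW₂
    simp only [disjoint_union_left, disjoint_union_right]
    exact ⟨⟨hd₁, hW₁Y₂.symm⟩, hW₂Y₁.symm, hd₂⟩
  have hWΔ : Disjoint (W₁ ∪ W₂) Δ := hYW.symm.mono_right hΔ
  rw [union_union_union_comm, union_sdiff_distrib, sdiff_eq_self_of_disjoint hWΔ,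
    fsumOut_union (hYW.mono_left sdiff_subset), fsumOut_union_mul h₁ h₂ hW₁ hW₂]
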